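/- arXiv:2408.09597 — 3 statements merged into one kernel-verified Lean document; each statement's English description precedes it below -/
import Mathlib

section
/- Let C be an even cycle in a graph G and f a fractional perfect matching taking values in {1/d, 2/d, ..., (d-1)/d} on all edges of C. Then the function f' obtained by alternately adding and subtracting 1/d along the edges of C is again a fractional perfect matching of G, its support is contained in the support of f, and f' takes values in {0, 1/d, ..., 1}. -/
open SimpleGraph Finset

/-- A fractional perfect matching of a locally finite graph: edge values in `[0,1]`
summing to `1` at every vertex. -/
def IsFPM {V : Type*} (G : SimpleGraph V) [G.LocallyFinite] (f : Sym2 V → ℝ) : Prop :=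
  (∀ e, 0 ≤ f e ∧ f e ≤ 1) ∧ ∀ x : V, ∑ y ∈ G.neighborFinset x, f s(x, y) = 1

/-- The support of a fractional perfect matching: the subgraph of edges `e`
with `0 < f e < 1`. -/
def fSupp {V : Type*} (G : SimpleGraph V) (f : Sym2 V → ℝ) : SimpleGraph V :=
  SimpleGraph.fromEdgeSet {e | e ∈ G.edgeSet ∧ 0 < f e ∧ f e < 1}

theorem stmt_2 {V : Type*} [Fintype V] (G : SimpleGraph V) [DecidableRel G.Adj]
    (d n : ℕ) (hd : 0 < d) (hn : 2 ≤ n)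
    (f f' : Sym2 V → ℝ) (hf : IsFPM G f)
    (x : ℕ → V)
    (hinj : ∀ i < 2 * n, ∀ j < 2 * n, x i = x j → i = j)
    (hclose : x (2 * n) = x 0)
    (hadj : ∀ i < 2 * n, G.Adj (x i) (x (i + 1)))
    (hvals : ∀ e, ∃ i ≤ d, f e = (i : ℝ) / d)
    (hcycvals : ∀ i < 2 * n, ∃ j : ℕ, 1 ≤ j ∧ j ≤ d - 1 ∧ f s(x i, x (i + 1)) = (j : ℝ) / d)
    (hf'on : ∀ i < 2 * n,
      (Even i → f' s(x i, x (i + 1)) = f s(x i, x (i + 1)) + 1 / d) ∧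
      (¬ Even i → f' s(x i, x (i + 1)) = f s(x i, x (i + 1)) - 1 / d))
    (hf'off : ∀ e : Sym2 V, (∀ i < 2 * n, e ≠ s(x i, x (i + 1))) → f' e = f e) :
    IsFPM G f' ∧ fSupp G f' ≤ fSupp G f ∧ ∀ e, ∃ i ≤ d, f' e = (i : ℝ) / d := by
  classical
  set N := 2 * n with hN
  have hN4 : 4 ≤ N := by omega
  set g : Sym2 V → ℝ := fun e => f' e - f e with hg
  have g_off : ∀ e, (∀ i < N, e ≠ s(x i, x (i+1))) → g e = 0 := by
    intro e he
    simp only [hg]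
    rw [hf'off e he]; ring
  have g_on : ∀ i < N, g s(x i, x (i+1)) = (if Even i then (1:ℝ) else -1) / d := by
    intro i hi
    rcases hf'on i hi with ⟨h1, h2⟩
    by_cases h : Even i
    · simp only [hg, h, if_true]; rw [h1 h]; ring
    · simp only [hg, h, if_false]; rw [h2 h]; ring
  have edge_cases : ∀ k < N, ∀ i < N, ∀ y : V,
      s(x k, y) = s(x i, x (i+1)) →
      (i = k ∧ y = x (k+1)) ∨
      (i = (if k = 0 then N - 1 else k - 1) ∧ y = x i) := by
    intro k hk i hi y hey
    rw [Sym2.eq_iff] at hey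
    rcases hey with ⟨hxk, hy⟩ | ⟨hxk, hy⟩
    · exact Or.inl ⟨(hinj k hk i hi hxk).symm, by rw [hy, hinj k hk i hi hxk]⟩
    · right
      by_cases hiN : i + 1 < N
      · have hki : k = i + 1 := hinj k hk (i+1) hiN hxk
        have hk0 : k ≠ 0 := by omega
        refine ⟨?_, hy⟩
        simp only [hk0, if_false]; omega
      · have hi1 : i + 1 = N := by omega
        have hx0 : x k = x 0 := by rw [hxk, hi1, hclose]
        have hk0 : k = 0 := hinj k hk 0 (by omega) hx0
        refine ⟨?_, hy⟩
        simp only [hk0, if_true]; omega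
  have gsum : ∀ v : V, ∑ y ∈ G.neighborFinset v, g s(v, y) = 0 := by
    intro v
    by_cases hv : ∃ k < N, v = x k
    · obtain ⟨k, hk, rfl⟩ := hv
      set p := (if k = 0 then N - 1 else k - 1) with hp
      have hpN : p < N := by rw [hp]; split <;> omega
      have hpv : x (p + 1) = x k := by
        rw [hp]
        split
        · rename_i h0
          rw [h0, show N - 1 + 1 = N by omega, hclose]
        · congr 1; omega
      have hpar : (p % 2 = 0) ↔ ¬ (k % 2 = 0) := by
        rw [hp]; split <;> omega
      have hab : x (k+1) ≠ x p := by
        intro h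
        by_cases hkN : k + 1 < N
        · have := hinj (k+1) hkN p hpN h
          rw [hp] at this; revert this; split <;> omega
        · have h0 : x 0 = x p := by
            rw [← hclose, show N = k + 1 by omega]; exact h
          have := hinj 0 (by omega) p hpN h0
          rw [hp] at this; revert this; split <;> omega
      have hsub : ({x (k+1), x p} : Finset V) ⊆ G.neighborFinset (x k) := by
        intro y hy
        simp only [Finset.mem_insert, Finset.mem_singleton] at hy
        rcases hy with rfl | rfl
        · exact (G.mem_neighborFinset _ _).2 (hadj k hk)
        · refine (G.mem_neighborFinset _ _).2 ?_
          have := hadj p hpN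
          rw [hpv] at this
          exact this.symm
      have hzero : ∀ y ∈ G.neighborFinset (x k), y ∉ ({x (k+1), x p} : Finset V) →
          g s(x k, y) = 0 := by
        intro y _ hy
        simp only [Finset.mem_insert, Finset.mem_singleton, not_or] at hy
        apply g_off
        intro i hi hey
        rcases edge_cases k hk i hi y hey with ⟨_, rfl⟩ | ⟨hip, rfl⟩
        · exact hy.1 rfl
        · exact hy.2 (by rw [hip, ← hp])
      rw [← Finset.sum_subset hsub hzero, Finset.sum_pair hab]
      have h1 : g s(x k, x (k+1)) = (if Even k then (1:ℝ) else -1) / d := g_on k hk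
      have h2 : g s(x k, x p) = (if Even p then (1:ℝ) else -1) / d := by
        rw [show s(x k, x p) = s(x p, x (p+1)) by rw [hpv, Sym2.eq_swap]]
        exact g_on p hpN
      rw [h1, h2]
      have hkp : Even p ↔ ¬ Even k := by
        rw [Nat.even_iff, Nat.even_iff]; exact hpar
      by_cases hke : Even k
      · rw [if_pos hke, if_neg (by simp [hkp, hke])]
        ring
      · rw [if_neg hke, if_pos (hkp.2 hke)]
        ring
    · push_neg at hv
      apply Finset.sum_eq_zero
      intro y _
      apply g_off
      intro i hi hey
      rw [Sym2.eq_iff] at hey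
      rcases hey with ⟨hxk, _⟩ | ⟨hxk, _⟩
      · exact hv i hi hxk
      · by_cases hiN : i + 1 < N
        · exact hv (i+1) hiN hxk
        · exact hv 0 (by omega) (by rw [← hclose, show N = i + 1 by omega]; exact hxk)
  have key : ∀ e, (∃ i ≤ d, f' e = (i:ℝ)/d) ∧ ((0 < f e ∧ f e < 1) ∨ f' e = f e) := by
    intro e
    by_cases he : ∃ i < N, e = s(x i, x (i+1))
    · obtain ⟨i, hi, rfl⟩ := he
      obtain ⟨j, hj1, hj2, hfj⟩ := hcycvals i hi
      have hd2 : 2 ≤ d := by omega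
      constructor
      · by_cases hev : Even i
        · refine ⟨j+1, by omega, ?_⟩
          rw [(hf'on i hi).1 hev, hfj]
          push_cast; ring
        · refine ⟨j-1, by omega, ?_⟩
          rw [(hf'on i hi).2 hev, hfj]
          rw [Nat.cast_sub hj1]
          push_cast; ring
      · left
        rw [hfj]
        constructor
        · apply div_pos (by exact_mod_cast hj1) (by exact_mod_cast hd)
        · rw [div_lt_one (by exact_mod_cast hd)]
          exact_mod_cast (by omega : j < d)
    · have hfe : f' e = f e := hf'off e (fun i hi h => he ⟨i, hi, h⟩)
      refine ⟨?_, Or.inr hfe⟩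
      rw [hfe]; exact hvals e
  refine ⟨⟨?_, ?_⟩, ?_, fun e => (key e).1⟩
  · intro e
    obtain ⟨i, hid, hie⟩ := (key e).1
    rw [hie]
    constructor
    · positivity
    · rw [div_le_one (by exact_mod_cast hd)]
      exact_mod_cast hid
  · intro v
    have h1 := hf.2 v
    have h2 := gsum v
    have h3 : ∑ y ∈ G.neighborFinset v, f' s(v, y)
        = ∑ y ∈ G.neighborFinset v, (f s(v,y) + g s(v,y)) := by
      apply Finset.sum_congr rfl
      intro y _
      simp only [hg]; ring
    rw [h3, Finset.sum_add_distrib, h1, h2, add_zero]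
  · intro v w hvw
    rw [fSupp, SimpleGraph.fromEdgeSet_adj] at hvw ⊢
    obtain ⟨⟨hG, hlt⟩, hne⟩ := hvw
    refine ⟨⟨hG, ?_⟩, hne⟩
    rcases (key s(v,w)).2 with h | h
    · exact h
    · rw [← h]; exact hlt
end

section
/- Let T be an acyclic graph (forest) with a fractional perfect matching f taking values in {0, 1/d, ..., 1}, and suppose (x_n)_{n∈ω} is an infinite ray in the support of f such that every vertex x_n with n even has degree exactly 2 in the support. Then all but finitely many vertices x_n have degree exactly 2 in the support of f. -/
open SimpleGraph Finset

lemma fSupp_adj {V : Type*} (G : SimpleGraph V) (f : Sym2 V → ℝ) (a b : V) :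
    (fSupp G f).Adj a b ↔ G.Adj a b ∧ 0 < f s(a, b) ∧ f s(a, b) < 1 := by
  constructor
  · rintro h
    rw [fSupp, SimpleGraph.fromEdgeSet_adj] at h
    exact h.1
  · intro h
    rw [fSupp, SimpleGraph.fromEdgeSet_adj]
    exact ⟨h, h.1.ne⟩

theorem stmt_3 {V : Type*} (G : SimpleGraph V) [G.LocallyFinite] (d : ℕ) (hd : 0 < d)
    (hac : G.IsAcyclic) (f : Sym2 V → ℝ) (hf : IsFPM G f)
    (hvals : ∀ e, ∃ i ≤ d, f e = (i : ℝ) / d)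
    (x : ℕ → V) (hinj : Function.Injective x)
    (hray : ∀ n, (fSupp G f).Adj (x n) (x (n + 1)))
    (heven : ∀ n, ((fSupp G f).neighborSet (x (2 * n))).ncard = 2) :
    ∃ N, ∀ n ≥ N, ((fSupp G f).neighborSet (x n)).ncard = 2 := by
  classical
  set H := fSupp G f with hH
  obtain ⟨hf01, hfsum⟩ := hf
  have hd' : (0 : ℝ) < d := by exact_mod_cast hd
  -- basic bounds on support edges
  have hlow : ∀ a b : V, H.Adj a b → 1 / d ≤ f s(a, b) := by
    intro a b hab
    obtain ⟨i, hid, hie⟩ := hvals s(a, b)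
    have h0 : 0 < f s(a, b) := ((fSupp_adj G f a b).mp hab).2.1
    have : 0 < i := by
      by_contra h
      push_neg at h
      interval_cases i
      simp [hie] at h0
    rw [hie]
    gcongr
    exact_mod_cast this
  have hup : ∀ a b : V, H.Adj a b → f s(a, b) ≤ 1 - 1 / d := by
    intro a b hab
    obtain ⟨i, hid, hie⟩ := hvals s(a, b)
    have h1 : f s(a, b) < 1 := ((fSupp_adj G f a b).mp hab).2.2
    have hi : (i : ℝ) < d := by
      by_contra h
      push_neg at h
      have : (1 : ℝ) ≤ f s(a, b) := by
        rw [hie]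
        rw [le_div_iff₀ hd']
        linarith
      linarith
    have hi' : i < d := by exact_mod_cast hi
    have hi2 : (i : ℝ) ≤ (d : ℝ) - 1 := by
      have : (i : ℕ) + 1 ≤ d := hi'
      have := (Nat.cast_le (α := ℝ)).mpr this
      push_cast at this
      linarith
    have heq : ((d : ℝ) - 1) / d = 1 - 1 / d := by
      field_simp
    rw [hie, ← heq]
    gcongr
  -- no edge with value 1 at a vertex with a support edge
  have hzero : ∀ a b : V, H.Adj a b → ∀ y : V, G.Adj a y → ¬ H.Adj a y → f s(a, y) = 0 := by
    intro a b hab y hay hnay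
    have hb : b ∈ G.neighborFinset a := by
      rw [SimpleGraph.mem_neighborFinset]
      exact ((fSupp_adj G f a b).mp hab).1
    have hy : y ∈ G.neighborFinset a := by rwa [SimpleGraph.mem_neighborFinset]
    rcases (hf01 s(a, y)).1.lt_or_eq with hpos | hzero'
    · exfalso
      -- then f s(a,y) must be < 1 would mean support; so = 1; contradiction with sum
      have h1 : f s(a, y) = 1 := by
        rcases (hf01 s(a, y)).2.lt_or_eq with hlt | he
        · exact absurd ((fSupp_adj G f a y).mpr ⟨hay, hpos, hlt⟩) hnay
        · exact he
      have hne : y ≠ b := by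
        intro h
        subst h
        exact hnay hab
      have hsub : ({y, b} : Finset V) ⊆ G.neighborFinset a := by
        intro z hz
        simp only [Finset.mem_insert, Finset.mem_singleton] at hz
        rcases hz with rfl | rfl <;> assumption
      have hle : ∑ z ∈ ({y, b} : Finset V), f s(a, z) ≤ ∑ z ∈ G.neighborFinset a, f s(a, z) :=
        Finset.sum_le_sum_of_subset_of_nonneg hsub (fun z _ _ => (hf01 s(a, z)).1)
      rw [Finset.sum_pair hne, hfsum a, h1] at hle
      have := hlow a b hab
      have : (0:ℝ) < 1 / d := by positivity
      linarith [hlow a b hab]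
    · exact hzero'.symm
  -- g n = f on the nth ray edge
  set g : ℕ → ℝ := fun n => f s(x n, x (n + 1)) with hg
  have hgsymm : ∀ n, f s(x (n + 1), x n) = g n := by
    intro n
    rw [Sym2.eq_swap]
  -- even-vertex identity: g (2n+1) + g (2n+2) = 1
  have hevenid : ∀ n : ℕ, g (2 * n + 1) + g (2 * n + 2) = 1 := by
    intro n
    have h2 : x (2 * (n + 1)) = x (2 * n + 2) := by ring_nf
    have hcard := heven (n + 1)
    rw [h2] at hcard
    set v := x (2 * n + 2) with hv
    set a := x (2 * n + 1) with ha
    set b := x (2 * n + 3) with hb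
    have hva : H.Adj v a := ((hray (2 * n + 1)).symm : _)
    have hvb : H.Adj v b := (hray (2 * n + 2) : _)
    have hab : a ≠ b := fun h => by
      have := hinj h
      omega
    -- neighborSet = {a, b}
    have hNS : H.neighborSet v = {a, b} := by
      have hfin : (H.neighborSet v).Finite := by
        apply Set.Finite.subset (G.neighborSet v).toFinite
        intro z hz
        exact ((fSupp_adj G f v z).mp hz).1
      have hsubset : ({a, b} : Set V) ⊆ H.neighborSet v := by
        intro z hz
        simp only [Set.mem_insert_iff, Set.mem_singleton_iff] at hz
        rcases hz with rfl | rfl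
        · exact hva
        · exact hvb
      exact (Set.eq_of_subset_of_ncard_le hsubset
        (by rw [hcard, Set.ncard_pair hab]) hfin).symm
    have hsub : ({a, b} : Finset V) ⊆ G.neighborFinset v := by
      intro z hz
      simp only [Finset.mem_insert, Finset.mem_singleton] at hz
      rw [SimpleGraph.mem_neighborFinset]
      rcases hz with rfl | rfl
      · exact ((fSupp_adj G f v a).mp hva).1
      · exact ((fSupp_adj G f v b).mp hvb).1
    have hsum : ∑ z ∈ G.neighborFinset v, f s(v, z) = ∑ z ∈ ({a, b} : Finset V), f s(v, z) := by
      symm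
      apply Finset.sum_subset hsub
      intro z hz hz'
      simp only [Finset.mem_insert, Finset.mem_singleton] at hz'
      push_neg at hz'
      have hGz : G.Adj v z := (SimpleGraph.mem_neighborFinset _ _ _).mp hz
      apply hzero v a hva z hGz
      intro hH'
      have : z ∈ H.neighborSet v := hH'
      rw [hNS] at this
      simp only [Set.mem_insert_iff, Set.mem_singleton_iff] at this
      tauto
    rw [hfsum v, Finset.sum_pair hab] at hsum
    have e1 : f s(v, a) = g (2 * n + 1) := hgsymm (2 * n + 1)
    have e2 : f s(v, b) = g (2 * n + 2) := rfl
    rw [e1, e2] at hsum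
    linarith
  -- odd-vertex bounds
  have hoddle : ∀ n : ℕ, g (2 * n) + g (2 * n + 1) ≤ 1 := by
    intro n
    set v := x (2 * n + 1) with hv
    have hva : H.Adj v (x (2 * n)) := ((hray (2 * n)).symm : _)
    have hvb : H.Adj v (x (2 * n + 2)) := (hray (2 * n + 1) : _)
    have hab : x (2 * n) ≠ x (2 * n + 2) := fun h => by
      have := hinj h; omega
    have hsub : ({x (2 * n), x (2 * n + 2)} : Finset V) ⊆ G.neighborFinset v := by
      intro z hz
      simp only [Finset.mem_insert, Finset.mem_singleton] at hz
      rw [SimpleGraph.mem_neighborFinset]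
      rcases hz with rfl | rfl
      · exact ((fSupp_adj G f v _).mp hva).1
      · exact ((fSupp_adj G f v _).mp hvb).1
    have hle : ∑ z ∈ ({x (2 * n), x (2 * n + 2)} : Finset V), f s(v, z)
        ≤ ∑ z ∈ G.neighborFinset v, f s(v, z) :=
      Finset.sum_le_sum_of_subset_of_nonneg hsub (fun z _ _ => (hf01 s(v, z)).1)
    rw [Finset.sum_pair hab, hfsum v] at hle
    have e1 : f s(v, x (2 * n)) = g (2 * n) := hgsymm (2 * n)
    have e2 : f s(v, x (2 * n + 2)) = g (2 * n + 1) := rfl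
    rw [e1, e2] at hle
    linarith
  have hoddbad : ∀ n : ℕ, (H.neighborSet (x (2 * n + 1))).ncard ≠ 2 →
      g (2 * n) + g (2 * n + 1) ≤ 1 - 1 / d := by
    intro n hbad
    set v := x (2 * n + 1) with hv
    set a := x (2 * n) with ha
    set b := x (2 * n + 2) with hb
    have hva : H.Adj v a := ((hray (2 * n)).symm : _)
    have hvb : H.Adj v b := (hray (2 * n + 1) : _)
    have hab : a ≠ b := fun h => by
      have := hinj h; omega
    have hfin : (H.neighborSet v).Finite := by
      apply Set.Finite.subset (G.neighborSet v).toFinite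
      intro z hz
      exact ((fSupp_adj G f v z).mp hz).1
    have hsubset : ({a, b} : Set V) ⊆ H.neighborSet v := by
      intro z hz
      simp only [Set.mem_insert_iff, Set.mem_singleton_iff] at hz
      rcases hz with rfl | rfl
      · exact hva
      · exact hvb
    have hne : H.neighborSet v ≠ {a, b} := by
      intro h
      apply hbad
      rw [h, Set.ncard_pair hab]
    have hss : ({a, b} : Set V) ⊂ H.neighborSet v := ⟨hsubset, fun h => hne (le_antisymm h hsubset)⟩
    obtain ⟨c, hcmem, hcnot⟩ := Set.exists_of_ssubset hss
    simp only [Set.mem_insert_iff, Set.mem_singleton_iff] at hcnot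
    push_neg at hcnot
    have hvc : H.Adj v c := hcmem
    have hsub : ({a, b, c} : Finset V) ⊆ G.neighborFinset v := by
      intro z hz
      simp only [Finset.mem_insert, Finset.mem_singleton] at hz
      rw [SimpleGraph.mem_neighborFinset]
      rcases hz with rfl | rfl | rfl
      · exact ((fSupp_adj G f v _).mp hva).1
      · exact ((fSupp_adj G f v _).mp hvb).1
      · exact ((fSupp_adj G f v _).mp hvc).1
    have hle : ∑ z ∈ ({a, b, c} : Finset V), f s(v, z)
        ≤ ∑ z ∈ G.neighborFinset v, f s(v, z) :=
      Finset.sum_le_sum_of_subset_of_nonneg hsub (fun z _ _ => (hf01 s(v, z)).1)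
    have hanotbc : a ∉ ({b, c} : Finset V) := by
      simp only [Finset.mem_insert, Finset.mem_singleton]
      push_neg
      exact ⟨hab, fun h => hcnot.1 h.symm⟩
    have hbc : b ≠ c := fun h => hcnot.2 h.symm
    rw [Finset.sum_insert hanotbc, Finset.sum_pair hbc, hfsum v] at hle
    have e1 : f s(v, a) = g (2 * n) := hgsymm (2 * n)
    have e2 : f s(v, b) = g (2 * n + 1) := rfl
    rw [e1, e2] at hle
    have := hlow v c hvc
    linarith
  -- monotone growth with jumps
  have Bad : ℕ → Prop := fun n => (H.neighborSet (x (2 * n + 1))).ncard ≠ 2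
  have hmain : ∀ n : ℕ, 1 / d +
      ((Finset.range n).filter (fun k => (H.neighborSet (x (2 * k + 1))).ncard ≠ 2)).card / d
      ≤ g (2 * n) := by
    intro n
    induction n with
    | zero =>
      simp only [Finset.range_zero, Finset.filter_empty, Finset.card_empty, Nat.cast_zero,
        zero_div, add_zero]
      exact hlow _ _ (hray 0)
    | succ n ih =>
      have hkey : g (2 * (n + 1)) = 1 - g (2 * n + 1) := by
        have := hevenid n
        have h2 : 2 * (n + 1) = 2 * n + 2 := by ring
        rw [h2]
        linarith
      rw [Finset.range_add_one, Finset.filter_insert]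
      by_cases hb : (H.neighborSet (x (2 * n + 1))).ncard ≠ 2
      · rw [if_pos hb, Finset.card_insert_of_notMem (by simp)]
        have := hoddbad n hb
        push_cast
        rw [hkey]
        have := ih
        have hdiv : ((((Finset.range n).filter
            (fun k => (H.neighborSet (x (2 * k + 1))).ncard ≠ 2)).card : ℝ) + 1) / d
            = (((Finset.range n).filter
            (fun k => (H.neighborSet (x (2 * k + 1))).ncard ≠ 2)).card : ℝ) / d + 1 / d := by
          ring
        rw [hdiv]
        linarith
      · rw [if_neg hb]
        have := hoddle n
        rw [hkey]
        linarith
  -- the bad set is finite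
  have hbadfin : {k : ℕ | (H.neighborSet (x (2 * k + 1))).ncard ≠ 2}.Finite := by
    by_contra hinf
    rw [← Set.Infinite] at hinf
    obtain ⟨t, hts, htcard⟩ := hinf.exists_subset_card_eq d
    have htne : t.Nonempty := by
      rw [← Finset.card_pos, htcard]; exact hd
    set m := t.max' htne + 1 with hm
    have htsub : t ⊆ (Finset.range m).filter
        (fun k => (H.neighborSet (x (2 * k + 1))).ncard ≠ 2) := by
      intro k hk
      rw [Finset.mem_filter, Finset.mem_range]
      exact ⟨Nat.lt_succ_of_le (t.le_max' k hk), hts hk⟩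
    have hcard : d ≤ ((Finset.range m).filter
        (fun k => (H.neighborSet (x (2 * k + 1))).ncard ≠ 2)).card := by
      rw [← htcard]
      exact Finset.card_le_card htsub
    have h1 := hmain m
    have h2 := hup _ _ (hray (2 * m))
    have h3 : (d : ℝ) ≤ (((Finset.range m).filter
        (fun k => (H.neighborSet (x (2 * k + 1))).ncard ≠ 2)).card : ℝ) := by
      exact_mod_cast hcard
    have h4 : (d : ℝ) / d ≤ (((Finset.range m).filter
        (fun k => (H.neighborSet (x (2 * k + 1))).ncard ≠ 2)).card : ℝ) / d := by
      gcongr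
    rw [div_self (ne_of_gt hd')] at h4
    have h5 : (0 : ℝ) < 1 / d := by positivity
    have : g (2 * m) ≤ 1 - 1 / d := h2
    linarith
  -- conclude
  obtain ⟨M, hM⟩ := hbadfin.bddAbove
  refine ⟨2 * M + 2, fun n hn => ?_⟩
  rcases Nat.even_or_odd n with ⟨m, hm⟩ | ⟨m, hm⟩
  · have : n = 2 * m := by omega
    rw [this]
    exact heven m
  · have : n = 2 * m + 1 := by omega
    subst this
    by_contra hbad
    have : m ≤ M := hM hbad
    omega
end

section
/- Let G be a finite bipartite graph with a fractional 2-matching f : E(G) → {0, 1/m, ..., 1} for m odd, such that for each vertex x there is a partition of the edges incident to x into two sets on each of which the f-values sum to 1. Then G admits a 2-factor. -/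
/-!
Split every vertex `x` into two copies `(x, false)` and `(x, true)`, the copy `(x, i)` carrying
the edges of the `i`-th part of the partition at `x`. The weights `f` form a fractional perfect
matching of the split graph, which is bipartite because `G` is. Double counting the weights around
a vertex set gives Hall's condition, so the split graph has a perfect matching. Merging the two
copies of each vertex turns it into a 2-factor of `G`: the matching edges at `(x, false)` and
`(x, true)` go to distinct neighbours of `x`, as they lie in different parts.
-/

open SimpleGraph Finset

section FractionalPerfectMatching

variable {V : Type*} {G : SimpleGraph V} {f : Sym2 V → ℝ}

theorem IsFPM.card_le_card_biUnion_neighborFinset [G.LocallyFinite] [DecidableEq V]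
    (hf : IsFPM G f) (s : Finset V) : #s ≤ #(s.biUnion fun x => G.neighborFinset x) := by
  set N := s.biUnion fun x => G.neighborFinset x
  suffices (#s : ℝ) ≤ #N by exact_mod_cast this
  calc (#s : ℝ) = ∑ x ∈ s, ∑ y ∈ G.neighborFinset x, f s(x, y) := by simp [hf.2]
    _ = ∑ y ∈ N, ∑ x ∈ (G.neighborFinset y).filter (· ∈ s), f s(x, y) :=
      Finset.sum_comm' fun x y => by
        simp only [N, mem_filter, mem_biUnion, mem_neighborFinset]
        grind [G.adj_comm]
    _ ≤ ∑ y ∈ N, ∑ x ∈ G.neighborFinset y, f s(y, x) := by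
      simp only [Sym2.eq_swap]
      gcongr with y
      · exact fun _ _ _ => (hf.1 _).1
      · exact filter_subset _ _
    _ = #N := by simp [hf.2]

theorem IsFPM.exists_isPerfectMatching [Finite V] [G.LocallyFinite] (hG : G.IsBipartite)
    (hf : IsFPM G f) : ∃ M : G.Subgraph, M.IsPerfectMatching := by
  classical
  have := Fintype.ofFinite V
  obtain ⟨s, t, hst⟩ := hG.exists_isBipartiteWith
  refine exists_isPerfectMatching_of_forall_ncard_le hst fun u => ?_
  convert hf.card_le_card_biUnion_neighborFinset u.toFinset using 1
  · exact Set.ncard_eq_toFinset_card' u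
  · rw [← Set.ncard_coe_finset]
    congr 1
    ext y
    simp

end FractionalPerfectMatching

namespace SimpleGraph

variable {V : Type*} {G : SimpleGraph V} {side : V → V → Bool}

/-- Each vertex `x` is split into `(x, false)` and `(x, true)`; the edge `xy` of `G` becomes the
edge between `(x, side x y)` and `(y, side y x)`. -/
def splitGraph (G : SimpleGraph V) (side : V → V → Bool) : SimpleGraph (V × Bool) where
  Adj a b := G.Adj a.1 b.1 ∧ side a.1 b.1 = a.2 ∧ side b.1 a.1 = b.2
  symm := ⟨fun _ _ h => ⟨h.1.symm, h.2.2, h.2.1⟩⟩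
  loopless := ⟨fun a h => G.loopless.irrefl a.1 h.1⟩

@[simp]
theorem splitGraph_adj {a b : V × Bool} :
    (G.splitGraph side).Adj a b ↔ G.Adj a.1 b.1 ∧ side a.1 b.1 = a.2 ∧ side b.1 a.1 = b.2 :=
  Iff.rfl

namespace splitGraph

instance [DecidableRel G.Adj] : DecidableRel (G.splitGraph side).Adj :=
  fun a b => inferInstanceAs (Decidable (G.Adj a.1 b.1 ∧ side a.1 b.1 = a.2 ∧ side b.1 a.1 = b.2))

def fstHom : G.splitGraph side →g G := ⟨Prod.fst, fun h => h.1⟩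

variable [Fintype V] [DecidableEq V] [DecidableRel G.Adj]

theorem neighborFinset_eq (x : V) (i : Bool) :
    (G.splitGraph side).neighborFinset (x, i) =
      ((G.neighborFinset x).filter (side x · = i)).image fun y => (y, side y x) := by
  ext ⟨y, j⟩
  simp [and_assoc, eq_comm]

theorem isFPM {f : Sym2 V → ℝ} (hf : ∀ e, 0 ≤ f e ∧ f e ≤ 1)
    (hsum : ∀ x i, ∑ y ∈ (G.neighborFinset x).filter (side x · = i), f s(x, y) = 1) :
    IsFPM (G.splitGraph side) (fun e => f (e.map Prod.fst)) := by
  refine ⟨fun e => hf _, fun ⟨x, i⟩ => ?_⟩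
  rw [neighborFinset_eq, Finset.sum_image fun _ _ _ _ h => (Prod.ext_iff.mp h).1]
  simpa using hsum x i

end splitGraph

theorem Subgraph.IsPerfectMatching.ncard_neighborSet_map_splitGraph_fstHom
    {M : (G.splitGraph side).Subgraph} (hM : M.IsPerfectMatching) (v : V) :
    ((M.map splitGraph.fstHom).spanningCoe.neighborSet v).ncard = 2 := by
  choose w hw hw_unique using Subgraph.isPerfectMatching_iff.mp hM
  have hside (i : Bool) : side v (w (v, i)).1 = i := (M.adj_sub (hw (v, i))).2.1
  have hnbr : (M.map splitGraph.fstHom).spanningCoe.neighborSet v =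
      {(w (v, false)).1, (w (v, true)).1} := by
    ext u
    simp only [SimpleGraph.mem_neighborSet, spanningCoe_adj, map_adj, Relation.Map]
    constructor
    · rintro ⟨⟨_, i⟩, b, hab, rfl, rfl⟩
      cases i <;> simp [hw_unique _ b hab, splitGraph.fstHom]
    · rintro (rfl | rfl)
      exacts [⟨_, _, hw (v, false), rfl, rfl⟩, ⟨_, _, hw (v, true), rfl, rfl⟩]
  rw [hnbr, Set.ncard_pair]
  intro h
  simpa [hside] using congrArg (side v) h

end SimpleGraph

theorem stmt_11_general {V : Type*} [Fintype V] [DecidableEq V] (G : SimpleGraph V) [DecidableRel G.Adj]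
    (hbip : G.Colorable 2) (m : ℕ)
    (f : Sym2 V → ℝ) (hvals : ∀ e, ∃ i ≤ m, f e = (i : ℝ) / m)
    (hpart : ∀ x : V, ∃ S ⊆ G.neighborFinset x,
      (∑ y ∈ S, f s(x, y)) = 1 ∧ (∑ y ∈ G.neighborFinset x \ S, f s(x, y)) = 1) :
    ∃ H : SimpleGraph V, H ≤ G ∧ ∀ v, (H.neighborSet v).ncard = 2 := by
  choose S hS hS_sum hS_compl_sum using hpart
  have hf (e : Sym2 V) : 0 ≤ f e ∧ f e ≤ 1 := by
    obtain ⟨i, hi, he⟩ := hvals e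
    rw [he]
    exact ⟨by positivity, div_le_one_of_le₀ (mod_cast hi) m.cast_nonneg⟩
  have hsplit (x : V) (i : Bool) :
      ∑ y ∈ (G.neighborFinset x).filter (fun y => decide (y ∈ S x) = i), f s(x, y) = 1 := by
    cases i
    · simpa [filter_notMem_eq_sdiff] using hS_compl_sum x
    · simpa [filter_mem_eq_inter, inter_eq_right.mpr (hS x)] using hS_sum x
  obtain ⟨M, hM⟩ := (splitGraph.isFPM hf hsplit).exists_isPerfectMatching
    (hbip.of_hom splitGraph.fstHom)
  exact ⟨_, Subgraph.spanningCoe_le _, hM.ncard_neighborSet_map_splitGraph_fstHom⟩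

theorem stmt_11 {V : Type*} [Fintype V] [DecidableEq V] (G : SimpleGraph V) [DecidableRel G.Adj]
    (hbip : G.Colorable 2) (m : ℕ) (hm : Odd m)
    (f : Sym2 V → ℝ) (hvals : ∀ e, ∃ i ≤ m, f e = (i : ℝ) / m)
    (h2match : ∀ x : V, ∑ y ∈ G.neighborFinset x, f s(x, y) = 2)
    (hpart : ∀ x : V, ∃ S ⊆ G.neighborFinset x,
      (∑ y ∈ S, f s(x, y)) = 1 ∧ (∑ y ∈ G.neighborFinset x \ S, f s(x, y)) = 1) :
    ∃ H : SimpleGraph V, H ≤ G ∧ ∀ v, (H.neighborSet v).ncard = 2 :=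
  stmt_11_general G hbip m f hvals hpart
end
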